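/- The subgroup of Aff(Z/64Z) generated by γ₁(c) = −c + 43 and γ₂(c) = 13·c + 30 is abelian of order 64, isomorphic to Z/32Z × Z/2Z, and acts regularly on Z/64Z. -/

import Mathlib

/-!
`γ₂` and `γ₁` commute and have orders dividing `32` and `2`, so `(a, b) ↦ γ₂ ^ a * γ₁ ^ b` is a
homomorphism from `ℤ/32 × ℤ/2` onto the group they generate. A finite check shows that evaluating
this homomorphism at `0` is a bijection onto `ℤ/64`; hence the homomorphism is injective and the
generated group acts regularly.
-/

/-- The affine permutation `c ↦ 13·c + 30` of `ZMod 64` (inverse `c ↦ 5·(c − 30)`,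
since `13 · 5 ≡ 1 (mod 64)`). -/
def gammaTwo : Equiv.Perm (ZMod 64) where
  toFun c := 13 * c + 30
  invFun c := 5 * (c - 30)
  left_inv := by decide
  right_inv := by decide

/-- The affine permutation `c ↦ −c + 43` of `ZMod 64`. -/
def gammaOne : Equiv.Perm (ZMod 64) where
  toFun c := -c + 43
  invFun c := 43 - c
  left_inv := by decide
  right_inv := by decide

section ZModPowers

variable {G : Type*} [Group G] {m n : ℕ} [NeZero m] [NeZero n] {a b : G}

def zmodPowersHom (a : G) (ha : a ^ n = 1) : Multiplicative (ZMod n) →* G where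
  toFun k := a ^ k.toAdd.val
  map_one' := by simp
  map_mul' k l := by
    simp only [toAdd_mul, ZMod.val_add, ← pow_eq_pow_mod _ ha, pow_add]

theorem range_zmodPowersHom (ha : a ^ n = 1) :
    (zmodPowersHom a ha).range = Subgroup.zpowers a := by
  refine le_antisymm ?_ (Subgroup.zpowers_le.2 ⟨Multiplicative.ofAdd 1, ?_⟩)
  · rintro _ ⟨k, rfl⟩
    exact Subgroup.npow_mem_zpowers a _
  · simp [zmodPowersHom, ZMod.val_one_eq_one_mod, ← pow_eq_pow_mod _ ha]

def Commute.zmodProdHom (hab : Commute a b) (ha : a ^ m = 1) (hb : b ^ n = 1) :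
    Multiplicative (ZMod m) × Multiplicative (ZMod n) →* G :=
  (zmodPowersHom a ha).noncommCoprod (zmodPowersHom b hb) fun k l =>
    -- phrased through `zmodPowersHom` so that the `noncommCoprod` lemmas can rewrite this term
    show Commute (zmodPowersHom a ha k) (zmodPowersHom b hb l) from hab.pow_pow _ _

theorem Commute.range_zmodProdHom (hab : Commute a b) (ha : a ^ m = 1) (hb : b ^ n = 1) :
    (hab.zmodProdHom ha hb).range = Subgroup.closure {a, b} := by
  rw [Commute.zmodProdHom, MonoidHom.noncommCoprod_range, range_zmodPowersHom,
    range_zmodPowersHom, Subgroup.zpowers_eq_closure, Subgroup.zpowers_eq_closure,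
    ← Subgroup.closure_union, Set.singleton_union]

end ZModPowers

section RegularAction

variable {H X : Type*} [Group H] (φ : H →* Equiv.Perm X) {x₀ : X}

theorem MonoidHom.injective_of_bijective_apply (h : Function.Bijective fun g => φ g x₀) :
    Function.Injective φ :=
  fun g g' hgg' => h.1 (by simp only [hgg'])

theorem MonoidHom.existsUnique_range_apply_eq (h : Function.Bijective fun g => φ g x₀)
    (x y : X) : ∃! f : φ.range, (f : Equiv.Perm X) x = y := by
  obtain ⟨q, rfl⟩ := h.2 x
  obtain ⟨r, rfl⟩ := h.2 y
  refine ⟨⟨φ (r * q⁻¹), r * q⁻¹, rfl⟩, by simp, ?_⟩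
  rintro ⟨_, p, rfl⟩ hp
  have hpq : p * q = r := h.1 (by simpa using hp)
  simp [← hpq]

end RegularAction

set_option maxRecDepth 10000

theorem gammaTwo_commute_gammaOne : Commute gammaTwo gammaOne := by
  unfold Commute SemiconjBy; decide

theorem gammaTwo_pow_32 : gammaTwo ^ 32 = 1 := by decide

theorem gammaOne_sq : gammaOne ^ 2 = 1 := by decide

def gammaHom : Multiplicative (ZMod 32) × Multiplicative (ZMod 2) →* Equiv.Perm (ZMod 64) :=
  gammaTwo_commute_gammaOne.zmodProdHom gammaTwo_pow_32 gammaOne_sq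

theorem range_gammaHom : gammaHom.range = Subgroup.closure {gammaOne, gammaTwo} := by
  rw [Set.pair_comm]
  exact gammaTwo_commute_gammaOne.range_zmodProdHom gammaTwo_pow_32 gammaOne_sq

theorem gammaHom_bijective_apply_zero : Function.Bijective fun p => gammaHom p 0 :=
  (Fintype.bijective_iff_injective_and_card _).2 ⟨by decide, rfl⟩

theorem subgroup_gamma_structure :
    (∀ f ∈ Subgroup.closure {gammaOne, gammaTwo},
      ∀ g ∈ Subgroup.closure {gammaOne, gammaTwo}, f * g = g * f) ∧
    Nat.card (Subgroup.closure {gammaOne, gammaTwo}) = 64 ∧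
    Nonempty ((Subgroup.closure {gammaOne, gammaTwo}) ≃*
      Multiplicative (ZMod 32) × Multiplicative (ZMod 2)) ∧
    (∀ x y : ZMod 64, ∃! f : (Subgroup.closure {gammaOne, gammaTwo} : Subgroup (Equiv.Perm (ZMod 64))),
      (f : Equiv.Perm (ZMod 64)) x = y) := by
  have hinj := gammaHom.injective_of_bijective_apply gammaHom_bijective_apply_zero
  rw [← range_gammaHom]
  refine ⟨?_, ?_, ⟨(MonoidHom.ofInjective hinj).symm⟩,
    gammaHom.existsUnique_range_apply_eq gammaHom_bijective_apply_zero⟩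
  · rintro _ ⟨p, rfl⟩ _ ⟨q, rfl⟩
    rw [← map_mul, ← map_mul, mul_comm]
  · rw [← Nat.card_congr (MonoidHom.ofInjective hinj).toEquiv]
    simp [Nat.card_eq_fintype_card]
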